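/- Let G be a finite simple graph and suppose that x_1 x_2 is an edge of G. Then (I(G)^(2) : x_1 x_2) + (x_1, x_2) = (I(G)^{2} : x_1 x_2) + (x_1, x_2). -/

import Mathlib

/-!
Every minimal prime of `I(G)` is `(X_V)` for a vertex cover `V`, and `f ∈ (X_V)²` iff every
monomial of `f` has two variables of `V` (with multiplicity) among its factors, so everything can
be checked monomial by monomial. Monomials divisible by `x₁` or `x₂` lie in `(x₁, x₂)`. For a
monomial `u` avoiding `x₁, x₂` with `u x₁ x₂ ∈ I(G)^(2)`, let `√u` be the product of the distinct
variables of `u`; the squarefree monomial `√u x₁ x₂` still lies in every `(X_V)²`: `V` contains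
`x₁` or `x₂`, so if `V` meets the support of `u` one variable of `√u` and one of `x₁, x₂`
suffice, and otherwise the two `V`-variables of `u x₁ x₂` are `x₁` and `x₂` themselves.
As `√u x₁ x₂` divides `u x₁ x₂`, this puts `u` into `(I(G)^{2} : x₁ x₂)`.
-/

open MvPolynomial

noncomputable section

/-! Generalities on graded pieces, Betti numbers and Castelnuovo–Mumford regularity
of homogeneous ideals in a polynomial ring, via the Koszul complex. -/

variable (K : Type) [Field K] (n : ℕ)

/-- The degree `d` graded piece of an ideal `I ⊆ K[x_1, …, x_n]`, as a `K`-subspace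
(`⊥` for negative `d`). -/
def degPiece (I : Ideal (MvPolynomial (Fin n) K)) (d : ℤ) :
    Submodule K (MvPolynomial (Fin n) K) :=
  if 0 ≤ d then (Submodule.restrictScalars K I) ⊓ homogeneousSubmodule (Fin n) K d.toNat
  else ⊥

theorem mulX_mem (I : Ideal (MvPolynomial (Fin n) K)) (k : Fin n) (d : ℤ)
    {x : MvPolynomial (Fin n) K} (hx : x ∈ degPiece K n I d) :
    (X k : MvPolynomial (Fin n) K) * x ∈ degPiece K n I (d + 1) := by
  by_cases h : 0 ≤ d
  · rw [degPiece, if_pos h, Submodule.mem_inf] at hx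
    rw [degPiece, if_pos (by omega : (0:ℤ) ≤ d + 1), Submodule.mem_inf]
    constructor
    · exact Ideal.mul_mem_left I _ hx.1
    · rw [mem_homogeneousSubmodule]
      have h2 := (isHomogeneous_X K k).mul ((mem_homogeneousSubmodule _ _).1 hx.2)
      have h3 : (d + 1).toNat = 1 + d.toNat := by omega
      rw [h3]
      exact h2
  · rw [degPiece, if_neg h, Submodule.mem_bot] at hx
    subst hx
    rw [mul_zero]
    exact Submodule.zero_mem _

/-- Multiplication by the variable `x_k`, as a map between graded pieces. -/
def mulXmap (I : Ideal (MvPolynomial (Fin n) K)) (k : Fin n) (d e : ℤ) (h : e = d + 1) :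
    degPiece K n I d →ₗ[K] degPiece K n I e :=
  LinearMap.restrict (LinearMap.mulLeft K (X k)) (by
    intro x hx
    subst h
    simpa using mulX_mem K n I k d hx)

/-- The differential, in internal degree `j`, of the complex obtained by tensoring the
ideal `I` with the Koszul complex on `x_1, …, x_n`; its homology computes
`Tor_i(I, K)_j`, whose dimension is the graded Betti number `β_{i,j}(I)`. -/
def koszulD (I : Ideal (MvPolynomial (Fin n) K)) (j i : ℕ) :
    ({T : Finset (Fin n) // T.card = i + 1} → degPiece K n I ((j : ℤ) - (i + 1)))
      →ₗ[K] ({T : Finset (Fin n) // T.card = i} → degPiece K n I ((j : ℤ) - i)) :=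
  LinearMap.pi fun T => ∑ k : Fin n,
    if h : k ∈ T.1 then 0
    else ((-1 : K) ^ (T.1.filter (fun l => l < k)).card) •
      ((mulXmap K n I k ((j : ℤ) - (i + 1)) ((j : ℤ) - i) (by ring)).comp
        (LinearMap.proj (⟨insert k T.1, by
          rw [Finset.card_insert_of_notMem h, T.2]⟩ : {T : Finset (Fin n) // T.card = i + 1})))

/-- The cycles of the (internal degree `j`) Koszul complex of `I` in homological degree `i`. -/
def kerChain (I : Ideal (MvPolynomial (Fin n) K)) (j : ℕ) :
    (i : ℕ) → Submodule K ({T : Finset (Fin n) // T.card = i} → degPiece K n I ((j : ℤ) - i))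
  | 0 => ⊤
  | (i + 1) => LinearMap.ker (koszulD K n I j i)

/-- The graded Betti number `β_{i,j}(I) = dim_K Tor_i(I, K)_j`. -/
def betti (I : Ideal (MvPolynomial (Fin n) K)) (i j : ℕ) : ℕ :=
  Module.finrank K (kerChain K n I j i) -
    Module.finrank K
      ((LinearMap.range (koszulD K n I j i) ⊓ kerChain K n I j i) : Submodule K _)

/-- The Castelnuovo–Mumford regularity `reg(I) = max { j - i | β_{i,j}(I) ≠ 0 }`. -/
def reg (I : Ideal (MvPolynomial (Fin n) K)) : ℤ :=
  sSup {r : ℤ | ∃ i j : ℕ, betti K n I i j ≠ 0 ∧ r = (j : ℤ) - i}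

/-- The squarefree part of a monomial ideal: the ideal generated by the squarefree
monomials belonging to it. -/
def sqfreePart (I : Ideal (MvPolynomial (Fin n) K)) : Ideal (MvPolynomial (Fin n) K) :=
  Ideal.span {m | m ∈ I ∧ ∃ A : Finset (Fin n), m = ∏ v ∈ A, X v}

/-- The `s`-th symbolic power of a (squarefree monomial) ideal:
the intersection of the `s`-th powers of its minimal primes; `S` for `s ≤ 0`. -/
def symbPow (I : Ideal (MvPolynomial (Fin n) K)) (s : ℤ) : Ideal (MvPolynomial (Fin n) K) :=
  if s ≤ 0 then ⊤ else ⨅ p ∈ I.minimalPrimes, p ^ s.toNat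

/-- `ssp I s` is `I^{s}`, the squarefree part of the `s`-th symbolic power of `I`. -/
def ssp (I : Ideal (MvPolynomial (Fin n) K)) (s : ℤ) : Ideal (MvPolynomial (Fin n) K) :=
  sqfreePart K n (symbPow K n I s)

/-- `sqPow I s` is `I^[s]`, the squarefree part of the ordinary power `I^s`. -/
def sqPow (I : Ideal (MvPolynomial (Fin n) K)) (s : ℕ) : Ideal (MvPolynomial (Fin n) K) :=
  sqfreePart K n (I ^ s)

/-- The height of an ideal: the minimum of the heights of its minimal primes. -/
def heightI (I : Ideal (MvPolynomial (Fin n) K)) : ℕ∞ :=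
  ⨅ p : I.minimalPrimes, Order.height (⟨p.1, p.2.1.1⟩ : PrimeSpectrum (MvPolynomial (Fin n) K))

/-- The colon ideal `(I : u)`. -/
def colonOf (I : Ideal (MvPolynomial (Fin n) K)) (u : MvPolynomial (Fin n) K) :
    Ideal (MvPolynomial (Fin n) K) :=
  Submodule.colon I (Ideal.span {u})

/-- `u` is a minimal monomial generator of the monomial ideal `I`:
`u` is a monomial belonging to `I` and `u/x_k ∉ I` for every variable `x_k` dividing `u`. -/
def IsMinGen (I : Ideal (MvPolynomial (Fin n) K)) (u : MvPolynomial (Fin n) K) : Prop :=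
  ∃ d : Fin n →₀ ℕ, u = monomial d (1 : K) ∧ u ∈ I ∧
    ∀ k : Fin n, d k ≠ 0 → monomial (d - Finsupp.single k 1) (1 : K) ∉ I

/-! Graph-theoretic notions. -/

/-- The graph obtained from `G` by deleting the vertices in `U` (and all edges meeting `U`),
on the same vertex set. -/
def delVerts (G : SimpleGraph (Fin n)) (U : Set (Fin n)) : SimpleGraph (Fin n) where
  Adj v w := G.Adj v w ∧ v ∉ U ∧ w ∉ U
  symm := ⟨fun _ _ h => ⟨h.1.symm, h.2.2, h.2.1⟩⟩
  loopless := ⟨fun v h => G.loopless.irrefl v h.1⟩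


/-- The edge ideal `I(G)` of a graph `G` on the vertex set `{x_1, …, x_n}`. -/
def edgeIdeal (G : SimpleGraph (Fin n)) : Ideal (MvPolynomial (Fin n) K) :=
  Ideal.span {m | ∃ v w, G.Adj v w ∧ m = X v * X w}

/-- `a`, `b` enumerate the endpoints of a matching of `G` of size `k`:
the edges `a i b i` are pairwise disjoint edges of `G`. -/
def IsMatching (G : SimpleGraph (Fin n)) (k : ℕ) (a b : Fin k → Fin n) : Prop :=
  (∀ i, G.Adj (a i) (b i)) ∧
    ∀ i j, i ≠ j → a i ≠ a j ∧ b i ≠ b j ∧ a i ≠ b j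

/-- The matching number `match(G)`. -/
def matchNum (G : SimpleGraph (Fin n)) : ℕ :=
  sSup {k | ∃ a b : Fin k → Fin n, IsMatching n G k a b}

/-- An induced matching: a matching such that no edge of `G` other than the matching edges
joins two of its vertices. -/
def IsInducedMatching (G : SimpleGraph (Fin n)) (k : ℕ) (a b : Fin k → Fin n) : Prop :=
  IsMatching n G k a b ∧ ∀ i j, i ≠ j →
    ¬ G.Adj (a i) (a j) ∧ ¬ G.Adj (a i) (b j) ∧ ¬ G.Adj (b i) (a j) ∧ ¬ G.Adj (b i) (b j)

/-- The induced matching number `ind-match(G)`. -/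
def indMatchNum (G : SimpleGraph (Fin n)) : ℕ :=
  sSup {k | ∃ a b : Fin k → Fin n, IsInducedMatching n G k a b}

/-- An ordered matching `{a_i b_i}`: the `a_i` form an independent set and
`a_i b_j ∈ E(G)` implies `i ≤ j`. -/
def IsOrderedMatching (G : SimpleGraph (Fin n)) (k : ℕ) (a b : Fin k → Fin n) : Prop :=
  IsMatching n G k a b ∧ (∀ i j, ¬ G.Adj (a i) (a j)) ∧ ∀ i j, G.Adj (a i) (b j) → i ≤ j

/-- The ordered matching number `ord-match(G)`. -/
def ordMatchNum (G : SimpleGraph (Fin n)) : ℕ :=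
  sSup {k | ∃ a b : Fin k → Fin n, IsOrderedMatching n G k a b}

/-- A graph is chordal if it has no induced cycle of length at least four. -/
def IsChordal (G : SimpleGraph (Fin n)) : Prop :=
  ∀ k : ℕ, 4 ≤ k → ∀ f : ZMod k → Fin n, Function.Injective f →
    ¬ (∀ i j : ZMod k, G.Adj (f i) (f j) ↔ (j = i + 1 ∨ i = j + 1))


/-- The star triangle graph with `t` triangles: vertex `0` is the common vertex of all the
triangles, and for `0 ≤ i < t` the vertices `2i+1`, `2i+2` are the other two vertices of the
`i`-th triangle. -/
def starTriangle (t : ℕ) : SimpleGraph (Fin (2 * t + 1)) where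
  Adj u v := u ≠ v ∧ ((u : ℕ) = 0 ∨ (v : ℕ) = 0 ∨ ((u : ℕ) - 1) / 2 = ((v : ℕ) - 1) / 2)
  symm := ⟨by
    intro u v h
    exact ⟨h.1.symm, by tauto⟩⟩
  loopless := ⟨by intro u h; exact h.1 rfl⟩

end

namespace MvPolynomial

variable {σ R : Type*}

theorem span_X_image_eq_ker_aeval [CommRing R] (V : Set σ) :
    Ideal.span (X '' V : Set (MvPolynomial σ R)) =
      RingHom.ker (aeval (Vᶜ.indicator X) : MvPolynomial σ R →ₐ[R] MvPolynomial σ R) := by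
  refine le_antisymm (Ideal.span_le.2 ?_) fun f hf => ?_
  · rintro _ ⟨k, hk, rfl⟩
    simp [hk]
  · set P := Ideal.span (X '' V : Set (MvPolynomial σ R))
    -- Modulo `P` the substitution `aeval (Vᶜ.indicator X)` fixes every variable, hence every `f`.
    have hφ : (Ideal.Quotient.mkₐ R P).comp (aeval (Vᶜ.indicator X)) =
        Ideal.Quotient.mkₐ R P := by
      refine algHom_ext fun k => ?_
      by_cases hk : k ∈ V
      · simpa [hk, eq_comm (a := (0 : _ ⧸ P)), Ideal.Quotient.eq_zero_iff_mem] using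
          Ideal.subset_span (Set.mem_image_of_mem X hk)
      · simp [hk]
    rw [← Ideal.Quotient.eq_zero_iff_mem, ← Ideal.Quotient.mkₐ_eq_mk R, ← hφ,
      AlgHom.comp_apply, RingHom.mem_ker.1 hf, map_zero]

theorem isPrime_span_X_image [CommRing R] [IsDomain R] (V : Set σ) :
    (Ideal.span (X '' V : Set (MvPolynomial σ R))).IsPrime := by
  rw [span_X_image_eq_ker_aeval]
  exact RingHom.ker_isPrime _

theorem mem_span_X_image_sq_iff [CommSemiring R] (V : Set σ) (f : MvPolynomial σ R) :
    f ∈ Ideal.span (X '' V : Set (MvPolynomial σ R)) ^ 2 ↔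
      ∀ s ∈ f.support, ∃ a ∈ V, ∃ b ∈ V, Finsupp.single a 1 + Finsupp.single b 1 ≤ s := by
  have hsq : Ideal.span (X '' V : Set (MvPolynomial σ R)) ^ 2 =
      Ideal.span ((fun s => monomial s (1 : R)) ''
        {s | ∃ a ∈ V, ∃ b ∈ V, s = Finsupp.single a 1 + Finsupp.single b 1}) := by
    rw [sq, Ideal.span_mul_span']
    congr 1
    ext u
    simp only [Set.mem_mul, Set.mem_image, Set.mem_ofPred_eq]
    constructor
    · rintro ⟨-, ⟨a, ha, rfl⟩, -, ⟨b, hb, rfl⟩, rfl⟩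
      exact ⟨_, ⟨a, ha, b, hb, rfl⟩, by simp [X, monomial_mul]⟩
    · rintro ⟨s, ⟨a, ha, b, hb, rfl⟩, rfl⟩
      exact ⟨X a, ⟨a, ha, rfl⟩, X b, ⟨b, hb, rfl⟩, by simp [X, monomial_mul]⟩
  simp only [hsq, mem_ideal_span_monomial_image, Set.mem_ofPred_eq]
  grind

theorem prod_X_support_mul_mem_span_X_image_sq [CommSemiring R] {V : Set σ} {d : σ →₀ ℕ}
    {x₁ x₂ : σ} (hV : x₁ ∈ V ∨ x₂ ∈ V)
    (h : ∃ a ∈ V, ∃ b ∈ V, Finsupp.single a 1 + Finsupp.single b 1 ≤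
      d + (Finsupp.single x₁ 1 + Finsupp.single x₂ 1)) :
    (∏ v ∈ d.support, X v) * (X x₁ * X x₂) ∈ Ideal.span (X '' V : Set (MvPolynomial σ R)) ^ 2 := by
  set P := Ideal.span (X '' V : Set (MvPolynomial σ R))
  have hX : ∀ {v}, v ∈ V → (X v : MvPolynomial σ R) ∈ P :=
    fun hv => Ideal.subset_span (Set.mem_image_of_mem X hv)
  rw [sq]
  have of_mem_support : ∀ v ∈ V, d v ≠ 0 → (∏ v ∈ d.support, X v) * (X x₁ * X x₂) ∈ P * P := by
    intro v hv hdv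
    have hXv := Finset.dvd_prod_of_mem (X (R := R)) (Finsupp.mem_support_iff.2 hdv)
    rcases hV with h₁ | h₂
    · exact Ideal.mem_of_dvd _ (mul_dvd_mul hXv (dvd_mul_right _ _))
        (Ideal.mul_mem_mul (hX hv) (hX h₁))
    · exact Ideal.mem_of_dvd _ (mul_dvd_mul hXv (dvd_mul_left _ _))
        (Ideal.mul_mem_mul (hX hv) (hX h₂))
  obtain ⟨a, ha, b, hb, hab⟩ := h
  by_cases hda : d a ≠ 0
  · exact of_mem_support a ha hda
  by_cases hdb : d b ≠ 0
  · exact of_mem_support b hb hdb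
  have hle : Finsupp.single a 1 + Finsupp.single b 1 ≤
      Finsupp.single x₁ 1 + Finsupp.single x₂ 1 := by
    classical
    intro k
    have := hab k
    simp only [Finsupp.add_apply, Finsupp.single_apply] at this ⊢
    split_ifs at this ⊢ <;> grind
  refine Ideal.mem_of_dvd _ (dvd_mul_of_dvd_right ?_ _) (Ideal.mul_mem_mul (hX ha) (hX hb))
  simpa [X, monomial_mul, monomial_dvd_monomial] using Or.inr hle

end MvPolynomial

open MvPolynomial

section EdgeIdeal

variable {K : Type} [Field K] {n : ℕ}

theorem sqfreePart_le (I : Ideal (MvPolynomial (Fin n) K)) : sqfreePart K n I ≤ I :=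
  Ideal.span_le.2 fun _ hm => hm.1

theorem mem_symbPow_two_iff {I : Ideal (MvPolynomial (Fin n) K)} {f : MvPolynomial (Fin n) K} :
    f ∈ symbPow K n I 2 ↔ ∀ p ∈ I.minimalPrimes, f ∈ p ^ 2 := by
  simp [symbPow, Submodule.mem_iInf]

theorem eq_span_X_image_of_mem_minimalPrimes_edgeIdeal {G : SimpleGraph (Fin n)}
    {p : Ideal (MvPolynomial (Fin n) K)} (hp : p ∈ (edgeIdeal K n G).minimalPrimes) :
    p = Ideal.span (X '' {k | X k ∈ p}) := by
  have hle : Ideal.span (X '' {k | X k ∈ p}) ≤ p :=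
    Ideal.span_le.2 (Set.image_subset_iff.2 fun _ h => h)
  refine le_antisymm (hp.2 ⟨isPrime_span_X_image _, Ideal.span_le.2 ?_⟩ hle) hle
  rintro _ ⟨v, w, hvw, rfl⟩
  rcases hp.1.1.mem_or_mem (hp.1.2 (Ideal.subset_span ⟨v, w, hvw, rfl⟩)) with hv | hw
  · exact Ideal.mul_mem_right _ _ (Ideal.subset_span ⟨v, hv, rfl⟩)
  · exact Ideal.mul_mem_left _ _ (Ideal.subset_span ⟨w, hw, rfl⟩)

theorem monomial_mul_mem_ssp_two_of_mul_mem_symbPow_two {G : SimpleGraph (Fin n)} {x₁ x₂ : Fin n}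
    (hadj : G.Adj x₁ x₂) {f : MvPolynomial (Fin n) K}
    (hf : f * (X x₁ * X x₂) ∈ symbPow K n (edgeIdeal K n G) 2) {d : Fin n →₀ ℕ}
    (hd : d ∈ f.support) (h₁ : d x₁ = 0) (h₂ : d x₂ = 0) (c : K) :
    monomial d c * (X x₁ * X x₂) ∈ ssp K n (edgeIdeal K n G) 2 := by
  have hX₁₂ : (X x₁ * X x₂ : MvPolynomial (Fin n) K) =
      monomial (Finsupp.single x₁ 1 + Finsupp.single x₂ 1) 1 := by
    simp [X, monomial_mul]
  have hsymb : (∏ v ∈ d.support, X v) * (X x₁ * X x₂) ∈ symbPow K n (edgeIdeal K n G) 2 := by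
    refine mem_symbPow_two_iff.2 fun p hp => ?_
    have hcover : x₁ ∈ {k | X k ∈ p} ∨ x₂ ∈ {k | X k ∈ p} :=
      hp.1.1.mem_or_mem (hp.1.2 (Ideal.subset_span ⟨x₁, x₂, hadj, rfl⟩))
    have hfp := mem_symbPow_two_iff.1 hf p hp
    rw [eq_span_X_image_of_mem_minimalPrimes_edgeIdeal hp] at hfp ⊢
    refine prod_X_support_mul_mem_span_X_image_sq hcover ((mem_span_X_image_sq_iff _ _).1 hfp _ ?_)
    rwa [mem_support_iff, hX₁₂, coeff_mul_monomial, mul_one, ← mem_support_iff]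
  have hsqfree : (∏ v ∈ d.support, X v) * (X x₁ * X x₂) =
      ∏ v ∈ insert x₁ (insert x₂ d.support), (X v : MvPolynomial (Fin n) K) := by
    rw [Finset.prod_insert, Finset.prod_insert]
    · ring
    · simpa using h₂
    · simpa [hadj.ne] using h₁
  have hdvd : ∏ v ∈ d.support, (X v : MvPolynomial (Fin n) K) ∣ monomial d c := by
    rw [monomial_eq, Finsupp.prod]
    exact dvd_mul_of_dvd_right (Finset.prod_dvd_prod_of_dvd _ _
      fun v hv => dvd_pow_self _ (Finsupp.mem_support_iff.1 hv)) _
  exact Ideal.mem_of_dvd _ (mul_dvd_mul_right hdvd _) (Ideal.subset_span ⟨hsymb, _, hsqfree⟩)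

theorem colonOf_symbPow_two_le {G : SimpleGraph (Fin n)} {x₁ x₂ : Fin n} (hadj : G.Adj x₁ x₂) :
    colonOf K n (symbPow K n (edgeIdeal K n G) 2) (X x₁ * X x₂) ≤
      colonOf K n (ssp K n (edgeIdeal K n G) 2) (X x₁ * X x₂) ⊔ Ideal.span {X x₁, X x₂} := by
  intro f hf
  rw [f.as_sum]
  refine Ideal.sum_mem _ fun d hd => ?_
  by_cases h₁ : d x₁ = 0
  · by_cases h₂ : d x₂ = 0
    · exact Ideal.mem_sup_left (Ideal.mem_colon_span_singleton.2
        (monomial_mul_mem_ssp_two_of_mul_mem_symbPow_two hadj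
          (Ideal.mem_colon_span_singleton.1 hf) hd h₁ h₂ _))
    · exact Ideal.mem_sup_right (Ideal.mem_of_dvd _ (X_dvd_monomial.2 (Or.inr h₂))
        (Ideal.subset_span (by simp)))
  · exact Ideal.mem_sup_right (Ideal.mem_of_dvd _ (X_dvd_monomial.2 (Or.inr h₁))
      (Ideal.subset_span (by simp)))

end EdgeIdeal

/-- For any edge `x_1 x_2` of `G`,
`(I(G)^(2) : x_1 x_2) + (x_1, x_2) = (I(G)^{2} : x_1 x_2) + (x_1, x_2)`. -/
theorem symbPow_colon_add_eq_ssp_colon_add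
    (K : Type) [Field K] (n : ℕ) (G : SimpleGraph (Fin n)) (x1 x2 : Fin n)
    (hadj : G.Adj x1 x2) :
    colonOf K n (symbPow K n (edgeIdeal K n G) 2)
        ((X x1 : MvPolynomial (Fin n) K) * X x2) +
        Ideal.span {(X x1 : MvPolynomial (Fin n) K), X x2} =
      colonOf K n (ssp K n (edgeIdeal K n G) 2)
        ((X x1 : MvPolynomial (Fin n) K) * X x2) +
        Ideal.span {(X x1 : MvPolynomial (Fin n) K), X x2} := by
  rw [Submodule.add_eq_sup, Submodule.add_eq_sup]
  exact le_antisymm (sup_le (colonOf_symbPow_two_le hadj) le_sup_right)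
    (sup_le_sup_right (Submodule.colon_mono (sqfreePart_le _) subset_rfl) _)
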